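/- arXiv:2012.06347 — 3 statements merged into one kernel-verified Lean document; each statement's English description precedes it below -/
import Mathlib

section
/- Optimality witness in the Gaussian case: for d ≥ 2 and γ the standard Gaussian on R^d, the vector field u(x) = (1 − x_2^2, x_1 x_2, 0, …, 0) satisfies ⟨u⟩ = 0, P(u) = 0, ⟨D^a u⟩ = 0, ∫|u|^2 dγ = 3, ∫|D^s u|^2 dγ = 3/2, ∫|D^a u|^2 dγ = 9/2, and ∫|Du|^2 dγ = 6. In particular, ∫|u|^2 dγ = 2 ∫|D^s u|^2 dγ and ∫|Du|^2 dγ = 4 ∫|D^s u|^2 dγ. -/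
open MeasureTheory Real

noncomputable section

/-- Partial derivative in direction `i`. -/
def pd {d : ℕ} (i : Fin d) (f : (Fin d → ℝ) → ℝ) (x : Fin d → ℝ) : ℝ :=
  fderiv ℝ f x (Pi.single i 1)

/-- Jacobian matrix `(∂_j u_i)`. -/
def jac {d : ℕ} (u : (Fin d → ℝ) → (Fin d → ℝ)) (x : Fin d → ℝ) (i j : Fin d) : ℝ :=
  pd j (fun y => u y i) x

/-- Symmetric part of the Jacobian. -/
def symJ {d : ℕ} (u : (Fin d → ℝ) → (Fin d → ℝ)) (x : Fin d → ℝ) (i j : Fin d) : ℝ :=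
  (jac u x i j + jac u x j i) / 2

/-- Antisymmetric part of the Jacobian. -/
def asymJ {d : ℕ} (u : (Fin d → ℝ) → (Fin d → ℝ)) (x : Fin d → ℝ) (i j : Fin d) : ℝ :=
  (jac u x i j - jac u x j i) / 2

/-- Squared Frobenius norm. -/
def frob {d : ℕ} (A : Fin d → Fin d → ℝ) : ℝ := ∑ i, ∑ j, (A i j) ^ 2

/-- Divergence of a vector field. -/
def diver {d : ℕ} (u : (Fin d → ℝ) → (Fin d → ℝ)) (x : Fin d → ℝ) : ℝ := ∑ i, jac u x i i

/-- Gradient of a scalar function. -/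
def grad {d : ℕ} (φ : (Fin d → ℝ) → ℝ) (x : Fin d → ℝ) (i : Fin d) : ℝ := pd i φ x

/-- Hessian matrix of a scalar function. -/
def hess {d : ℕ} (φ : (Fin d → ℝ) → ℝ) (x : Fin d → ℝ) (i j : Fin d) : ℝ :=
  pd j (fun y => pd i φ y) x

/-- Density of the standard Gaussian measure on `ℝ^d`. -/
def gw (d : ℕ) (x : Fin d → ℝ) : ℝ :=
  (2 * π) ^ (-(d : ℝ) / 2) * Real.exp (-(∑ i, (x i) ^ 2) / 2)

/-! The field is even in `x`, so its Jacobian is odd, and the standard Gaussian is invariant under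
`x ↦ -x`: this kills the mean of `D^a u` and the pairing of `u` with every linear field `x ↦ Ax`.
Everything else is the Gaussian integral of a polynomial in two coordinates; as the density is a
product of one-dimensional ones, these reduce to the moments `1, 0, 1, 3` of orders `0, …, 4`,
which come from the integration by parts `m (n + 2) = (n + 1) m n` (using `φ' t = -t φ t`). -/

open ProbabilityTheory

theorem integral_eq_zero_of_odd {G E : Type*} [MeasurableSpace G] [AddGroup G] [MeasurableNeg G]
    [NormedAddCommGroup E] [NormedSpace ℝ E] (μ : Measure G) [μ.IsNegInvariant] {f : G → E}
    (hf : f.Odd) : ∫ x, f x ∂μ = 0 := by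
  have h := integral_neg_eq_self f μ
  simp only [hf.eq, integral_neg] at h
  have h2 : (2 : ℝ) • ∫ x, f x ∂μ = 0 := by rw [two_smul]; nth_rw 1 [← h]; exact neg_add_cancel _
  exact (smul_eq_zero.mp h2).resolve_left two_ne_zero

section Moments

def gaussianMoment (n : ℕ) : ℝ := ∫ t, t ^ n * gaussianPDFReal 0 1 t

lemma gaussianPDFReal_zero_one (t : ℝ) :
    gaussianPDFReal 0 1 t = (√(2 * π))⁻¹ * exp (-(1 / 2) * t ^ 2) := by
  simp [gaussianPDFReal, div_eq_inv_mul]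

lemma hasDerivAt_gaussianPDFReal_zero_one (t : ℝ) :
    HasDerivAt (gaussianPDFReal 0 1) (-t * gaussianPDFReal 0 1 t) t := by
  have h := (((hasDerivAt_pow 2 t).const_mul (-(1 / 2) : ℝ)).exp).const_mul (√(2 * π))⁻¹
  rw [funext gaussianPDFReal_zero_one]
  refine h.congr_deriv ?_
  push_cast
  ring

lemma integrable_pow_mul_gaussianPDFReal (n : ℕ) :
    Integrable fun t : ℝ => t ^ n * gaussianPDFReal 0 1 t := by
  have h := (integrable_rpow_mul_exp_neg_mul_sq (b := 1 / 2) (by norm_num)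
    (s := n) (by linarith [n.cast_nonneg (α := ℝ)])).const_mul (√(2 * π))⁻¹
  refine h.congr (ae_of_all _ fun t => ?_)
  simp only [rpow_natCast, gaussianPDFReal_zero_one]
  ring

lemma gaussianMoment_add_two (n : ℕ) :
    gaussianMoment (n + 2) = (n + 1) * gaussianMoment n := by
  have h := integral_mul_deriv_eq_deriv_mul_of_integrable
    (u := fun t : ℝ => t ^ (n + 1)) (u' := fun t => (n + 1) * t ^ n)
    (v := gaussianPDFReal 0 1) (v' := fun t => -t * gaussianPDFReal 0 1 t)
    (fun t _ => by simpa using hasDerivAt_pow (n + 1) t)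
    (fun t _ => hasDerivAt_gaussianPDFReal_zero_one t)
    ((integrable_pow_mul_gaussianPDFReal (n + 2)).neg.congr (ae_of_all _ fun t => by
      simp only [Pi.mul_apply, Pi.neg_apply]; ring))
    (((integrable_pow_mul_gaussianPDFReal n).const_mul (n + 1)).congr (ae_of_all _ fun t => by
      simp only [Pi.mul_apply]; ring))
    (integrable_pow_mul_gaussianPDFReal (n + 1))
  calc gaussianMoment (n + 2) = -∫ t, t ^ (n + 1) * (-t * gaussianPDFReal 0 1 t) := by
        rw [gaussianMoment, ← integral_neg]; congr 1 with t; ring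
    _ = (n + 1) * gaussianMoment n := by
        rw [h, neg_neg, gaussianMoment, ← integral_const_mul]; congr 1 with t; ring

lemma gaussianMoment_zero : gaussianMoment 0 = 1 := by
  simp [gaussianMoment, integral_gaussianPDFReal_eq_one]

lemma gaussianMoment_one : gaussianMoment 1 = 0 :=
  integral_eq_zero_of_odd volume fun t => by simp [gaussianPDFReal]

lemma gaussianMoment_two : gaussianMoment 2 = 1 := by
  simpa [gaussianMoment_zero] using gaussianMoment_add_two 0

lemma gaussianMoment_four : gaussianMoment 4 = 3 := by
  rw [gaussianMoment_add_two 2, gaussianMoment_two]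
  norm_num

end Moments

lemma prod_apply_pi_single {ι N M : Type*} [Fintype ι] [DecidableEq ι] [Zero N] [CommMonoid M]
    {f : ι → N → M} (hf : ∀ k, f k 0 = 1) (i : ι) (n : N) :
    ∏ k, f k ((Pi.single i n : ι → N) k) = f i n :=
  (Fintype.prod_eq_single i fun k hk => by simp [hk, hf]).trans (by simp)

lemma prod_apply_pi_single_add_pi_single {ι N M : Type*} [Fintype ι] [DecidableEq ι]
    [AddZeroClass N] [CommMonoid M] {f : ι → N → M} (hf : ∀ k, f k 0 = 1) {a b : ι} (hab : a ≠ b)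
    (m n : N) : ∏ k, f k ((Pi.single a m + Pi.single b n : ι → N) k) = f a m * f b n :=
  (Fintype.prod_eq_mul a b hab fun k hk => by simp [hk.1, hk.2, hf]).trans
    (by simp [hab, hab.symm])

section StandardGaussian

variable {d : ℕ}

lemma gw_eq_prod (x : Fin d → ℝ) : gw d x = ∏ i, gaussianPDFReal 0 1 (x i) := by
  simp only [gw, gaussianPDFReal_zero_one, Finset.prod_mul_distrib, Finset.prod_const,
    Finset.card_univ, Fintype.card_fin, ← exp_sum, ← Finset.mul_sum]
  congr 1
  · rw [sqrt_eq_rpow, ← rpow_neg (by positivity), ← rpow_mul_natCast (by positivity)]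
    ring_nf
  · ring_nf

lemma gw_even : (gw d).Even := fun x => by simp [gw]

lemma integral_mul_gw_eq_zero_of_odd {f : (Fin d → ℝ) → ℝ} (hf : f.Odd) :
    ∫ x, f x * gw d x = 0 :=
  integral_eq_zero_of_odd volume (hf.mul_even gw_even)

lemma prod_pow_mul_gw (e : Fin d → ℕ) (x : Fin d → ℝ) :
    (∏ i, x i ^ e i) * gw d x = ∏ i, x i ^ e i * gaussianPDFReal 0 1 (x i) := by
  rw [gw_eq_prod, Finset.prod_mul_distrib]

lemma integrable_prod_pow_mul_gw (e : Fin d → ℕ) :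
    Integrable fun x : Fin d → ℝ => (∏ i, x i ^ e i) * gw d x := by
  simp only [prod_pow_mul_gw]
  exact Integrable.fintype_prod (f := fun i t => t ^ e i * gaussianPDFReal 0 1 t)
    fun i => integrable_pow_mul_gaussianPDFReal (e i)

lemma integral_prod_pow_mul_gw (e : Fin d → ℕ) :
    ∫ x, (∏ i, x i ^ e i) * gw d x = ∏ i, gaussianMoment (e i) := by
  simp only [prod_pow_mul_gw]
  exact integral_fintype_prod_volume_eq_prod (fun i t => t ^ e i * gaussianPDFReal 0 1 t)

lemma integrable_gw : Integrable (gw d) := by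
  simpa using integrable_prod_pow_mul_gw (d := d) 0

lemma integral_gw : ∫ x, gw d x = 1 := by
  simpa [gaussianMoment_zero] using integral_prod_pow_mul_gw (d := d) 0

lemma integrable_pow_mul_gw (i : Fin d) (n : ℕ) :
    Integrable fun x : Fin d → ℝ => x i ^ n * gw d x := by
  refine (integrable_prod_pow_mul_gw (Pi.single i n)).congr (ae_of_all _ fun x => ?_)
  dsimp only
  rw [prod_apply_pi_single (f := (x · ^ ·)) (fun _ => pow_zero _)]

lemma integral_pow_mul_gw (i : Fin d) (n : ℕ) :
    ∫ x, x i ^ n * gw d x = gaussianMoment n := by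
  rw [← prod_apply_pi_single (f := fun _ => gaussianMoment) (fun _ => gaussianMoment_zero) i n,
    ← integral_prod_pow_mul_gw]
  congr 1 with x
  rw [prod_apply_pi_single (f := (x · ^ ·)) (fun _ => pow_zero _)]

lemma integrable_pow_mul_pow_mul_gw {a b : Fin d} (hab : a ≠ b) (m n : ℕ) :
    Integrable fun x : Fin d → ℝ => x a ^ m * x b ^ n * gw d x := by
  refine (integrable_prod_pow_mul_gw (Pi.single a m + Pi.single b n)).congr
    (ae_of_all _ fun x => ?_)
  dsimp only
  rw [prod_apply_pi_single_add_pi_single (f := (x · ^ ·)) (fun _ => pow_zero _) hab]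

lemma integral_pow_mul_pow_mul_gw {a b : Fin d} (hab : a ≠ b) (m n : ℕ) :
    ∫ x, x a ^ m * x b ^ n * gw d x = gaussianMoment m * gaussianMoment n := by
  rw [← prod_apply_pi_single_add_pi_single (f := fun _ => gaussianMoment)
    (fun _ => gaussianMoment_zero) hab, ← integral_prod_pow_mul_gw]
  congr 1 with x
  rw [prod_apply_pi_single_add_pi_single (f := (x · ^ ·)) (fun _ => pow_zero _) hab]

lemma integral_mul_sq_add_mul_sq_mul_gw (a b : Fin d) (p q : ℝ) :
    ∫ x, (p * x a ^ 2 + q * x b ^ 2) * gw d x = p + q := by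
  have ha := integrable_pow_mul_gw a 2
  have hb := integrable_pow_mul_gw b 2
  simp_rw [add_mul, mul_assoc]
  rw [integral_add (ha.const_mul p) (hb.const_mul q), integral_const_mul, integral_const_mul,
    integral_pow_mul_gw, integral_pow_mul_gw, gaussianMoment_two, mul_one, mul_one]

end StandardGaussian

section EvenFields

variable {d : ℕ}

lemma pd_eq_of_hasFDerivAt {f : (Fin d → ℝ) → ℝ} {f' : (Fin d → ℝ) →L[ℝ] ℝ}
    {x : Fin d → ℝ} (hf : HasFDerivAt f f' x) (j : Fin d) : pd j f x = f' (Pi.single j 1) := by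
  rw [pd, hf.fderiv]

lemma pd_neg_of_even {f : (Fin d → ℝ) → ℝ} (hf : f.Even) (j : Fin d) (x : Fin d → ℝ) :
    pd j f (-x) = -pd j f x := by
  have h := fderiv_comp_smul (𝕜 := ℝ) (f := f) (x := -x) (-1)
  simp only [hf.eq, neg_smul, one_smul, neg_neg] at h
  simp [pd, h]

lemma jac_neg_of_even {u : (Fin d → ℝ) → Fin d → ℝ} (hu : u.Even) (x : Fin d → ℝ) (i j : Fin d) :
    jac u (-x) i j = -jac u x i j :=
  pd_neg_of_even (fun y => congrFun (hu y) i) j x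

lemma integral_asymJ_mul_gw_of_even {u : (Fin d → ℝ) → Fin d → ℝ} (hu : u.Even) (i j : Fin d) :
    ∫ x, asymJ u x i j * gw d x = 0 :=
  integral_mul_gw_eq_zero_of_odd fun x => by
    simp only [asymJ, jac_neg_of_even hu]
    ring

lemma integral_inner_linear_mul_gw_of_even {u : (Fin d → ℝ) → Fin d → ℝ} (hu : u.Even)
    (A : Fin d → Fin d → ℝ) :
    ∫ x, (∑ i, u x i * ∑ j, A i j * x j) * gw d x = 0 :=
  integral_mul_gw_eq_zero_of_odd fun x => by
    simp [hu.eq, Finset.sum_neg_distrib]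

end EvenFields

section Witness

variable {d : ℕ}

def witnessField (a b : Fin d) (x : Fin d → ℝ) : Fin d → ℝ :=
  fun i => if i = a then 1 - x b ^ 2 else if i = b then x a * x b else 0

lemma witnessField_even (a b : Fin d) : (witnessField a b).Even := fun x => by
  ext i
  simp [witnessField]

lemma jac_witnessField (a b : Fin d) (x : Fin d → ℝ) (i j : Fin d) :
    jac (witnessField a b) x i j =
      if i = a then -(2 * x b * (Pi.single j 1 : Fin d → ℝ) b)
      else if i = b then x a * (Pi.single j 1 : Fin d → ℝ) b + x b * (Pi.single j 1 : Fin d → ℝ) a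
      else 0 := by
  unfold jac witnessField
  split_ifs
  · rw [pd_eq_of_hasFDerivAt (((hasFDerivAt_apply b x).pow 2).const_sub 1)]
    simp
  · rw [pd_eq_of_hasFDerivAt ((hasFDerivAt_apply a x).fun_mul (hasFDerivAt_apply b x))]
    simp
  · simp [pd]

lemma jac_witnessField_eq_zero {a b i j : Fin d} (x : Fin d → ℝ)
    (h : (i ≠ a ∧ i ≠ b) ∨ (j ≠ a ∧ j ≠ b)) : jac (witnessField a b) x i j = 0 := by
  rcases h with hi | hj
  · simp [jac_witnessField, hi.1, hi.2]
  · simp [jac_witnessField, hj.1.symm, hj.2.symm]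

lemma frob_eq_of_vanishing {A : Fin d → Fin d → ℝ} {a b : Fin d} (hab : a ≠ b)
    (hA : ∀ i j, (i ≠ a ∧ i ≠ b) ∨ (j ≠ a ∧ j ≠ b) → A i j = 0) :
    frob A = A a a ^ 2 + A a b ^ 2 + (A b a ^ 2 + A b b ^ 2) := by
  have row (i : Fin d) : ∑ j, A i j ^ 2 = A i a ^ 2 + A i b ^ 2 :=
    Fintype.sum_eq_add a b hab fun j hj => by simp [hA i j (.inr hj)]
  rw [frob, Fintype.sum_eq_add a b hab fun i hi => by simp [hA i _ (.inl hi)], row, row]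

lemma frob_jac_witnessField {a b : Fin d} (hab : a ≠ b) (x : Fin d → ℝ) :
    frob (jac (witnessField a b) x) = 5 * x b ^ 2 + x a ^ 2 := by
  rw [frob_eq_of_vanishing hab fun i j h => jac_witnessField_eq_zero x h]
  simp only [jac_witnessField, hab, hab.symm, if_true, if_false, Pi.single_eq_same, Pi.single_eq_of_ne hab,
    Pi.single_eq_of_ne hab.symm]
  ring

lemma frob_symJ_witnessField {a b : Fin d} (hab : a ≠ b) (x : Fin d → ℝ) :
    frob (symJ (witnessField a b) x) = x b ^ 2 / 2 + x a ^ 2 := by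
  rw [frob_eq_of_vanishing hab fun i j h => by
    simp [symJ, jac_witnessField_eq_zero x h, jac_witnessField_eq_zero x h.symm]]
  simp only [symJ, jac_witnessField, hab, hab.symm, if_true, if_false, Pi.single_eq_same, Pi.single_eq_of_ne hab,
    Pi.single_eq_of_ne hab.symm]
  ring

lemma frob_asymJ_witnessField {a b : Fin d} (hab : a ≠ b) (x : Fin d → ℝ) :
    frob (asymJ (witnessField a b) x) = 9 / 2 * x b ^ 2 := by
  rw [frob_eq_of_vanishing hab fun i j h => by
    simp [asymJ, jac_witnessField_eq_zero x h, jac_witnessField_eq_zero x h.symm]]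
  simp only [asymJ, jac_witnessField, hab, hab.symm, if_true, if_false, Pi.single_eq_same, Pi.single_eq_of_ne hab,
    Pi.single_eq_of_ne hab.symm]
  ring

lemma sum_sq_witnessField {a b : Fin d} (hab : a ≠ b) (x : Fin d → ℝ) :
    ∑ i, witnessField a b x i ^ 2 = (1 - x b ^ 2) ^ 2 + (x a * x b) ^ 2 :=
  (Fintype.sum_eq_add a b hab fun i hi => by simp [witnessField, hi.1, hi.2]).trans
    (by simp [witnessField, hab.symm])

end Witness

section WitnessIntegrals

variable {d : ℕ} {a b : Fin d}

lemma integral_witnessField_mul_gw (hab : a ≠ b) (i : Fin d) :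
    ∫ x, witnessField a b x i * gw d x = 0 := by
  by_cases hia : i = a
  · simp only [witnessField, hia, if_true, sub_mul, one_mul]
    rw [integral_sub integrable_gw (integrable_pow_mul_gw b 2), integral_gw, integral_pow_mul_gw,
      gaussianMoment_two, sub_self]
  by_cases hib : i = b
  · simpa [witnessField, hib, hab.symm, gaussianMoment_one] using integral_pow_mul_pow_mul_gw hab 1 1
  · simp [witnessField, hia, hib]

lemma integral_sum_sq_witnessField_mul_gw (hab : a ≠ b) :
    ∫ x, (∑ i, witnessField a b x i ^ 2) * gw d x = 3 := by
  have h0 := integrable_gw (d := d)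
  have h2 := integrable_pow_mul_gw b 2
  have h4 := integrable_pow_mul_gw b 4
  have h22 := integrable_pow_mul_pow_mul_gw hab 2 2
  calc ∫ x, (∑ i, witnessField a b x i ^ 2) * gw d x
      = ∫ x, (gw d x - 2 * (x b ^ 2 * gw d x) + x b ^ 4 * gw d x
          + x a ^ 2 * x b ^ 2 * gw d x) := by
        congr 1 with x
        rw [sum_sq_witnessField hab]
        ring
    _ = 1 - 2 * 1 + 3 + 1 * 1 := by
        rw [integral_add (by fun_prop) h22, integral_add (by fun_prop) h4,
          integral_sub h0 (by fun_prop), integral_const_mul, integral_gw, integral_pow_mul_gw,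
          integral_pow_mul_gw, integral_pow_mul_pow_mul_gw hab, gaussianMoment_two,
          gaussianMoment_four]
    _ = 3 := by norm_num

lemma integral_frob_symJ_witnessField_mul_gw (hab : a ≠ b) :
    ∫ x, frob (symJ (witnessField a b) x) * gw d x = 3 / 2 := by
  calc _ = ∫ x, (1 / 2 * x b ^ 2 + 1 * x a ^ 2) * gw d x := by
        congr 1 with x
        rw [frob_symJ_witnessField hab]
        ring
    _ = 3 / 2 := by rw [integral_mul_sq_add_mul_sq_mul_gw]; norm_num

lemma integral_frob_asymJ_witnessField_mul_gw (hab : a ≠ b) :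
    ∫ x, frob (asymJ (witnessField a b) x) * gw d x = 9 / 2 := by
  calc _ = ∫ x, (9 / 2 * x b ^ 2 + 0 * x a ^ 2) * gw d x := by
        congr 1 with x
        rw [frob_asymJ_witnessField hab]
        ring
    _ = 9 / 2 := by rw [integral_mul_sq_add_mul_sq_mul_gw]; norm_num

lemma integral_frob_jac_witnessField_mul_gw (hab : a ≠ b) :
    ∫ x, frob (jac (witnessField a b) x) * gw d x = 6 := by
  calc _ = ∫ x, (5 * x b ^ 2 + 1 * x a ^ 2) * gw d x := by
        congr 1 with x
        rw [frob_jac_witnessField hab]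
        ring
    _ = 6 := by rw [integral_mul_sq_add_mul_sq_mul_gw]; norm_num

end WitnessIntegrals

/-- Explicit optimality witness in the Gaussian case. -/
theorem stmt_10 (d : ℕ) (hd : 2 ≤ d)
    (u : (Fin d → ℝ) → (Fin d → ℝ))
    (hu : u = fun x i =>
      if i = (⟨0, by omega⟩ : Fin d) then 1 - (x ⟨1, by omega⟩) ^ 2
      else if i = (⟨1, by omega⟩ : Fin d) then x ⟨0, by omega⟩ * x ⟨1, by omega⟩
      else 0) :
    (∀ i, ∫ x, u x i * gw d x = 0) ∧
    (∀ A : Fin d → Fin d → ℝ, (∀ i j, A i j = -A j i) →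
      ∫ x, (∑ i, u x i * ∑ j, A i j * x j) * gw d x = 0) ∧
    (∀ i j, ∫ x, asymJ u x i j * gw d x = 0) ∧
    (∫ x, (∑ i, (u x i) ^ 2) * gw d x = 3) ∧
    (∫ x, frob (symJ u x) * gw d x = 3 / 2) ∧
    (∫ x, frob (asymJ u x) * gw d x = 9 / 2) ∧
    (∫ x, frob (jac u x) * gw d x = 6) := by
  have h01 : (⟨0, by omega⟩ : Fin d) ≠ ⟨1, by omega⟩ := by simp
  have hw : u = witnessField ⟨0, by omega⟩ ⟨1, by omega⟩ := hu
  subst hw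
  exact ⟨integral_witnessField_mul_gw h01,
    fun A _ => integral_inner_linear_mul_gw_of_even (witnessField_even _ _) A,
    integral_asymJ_mul_gw_of_even (witnessField_even _ _),
    integral_sum_sq_witnessField_mul_gw h01,
    integral_frob_symJ_witnessField_mul_gw h01,
    integral_frob_asymJ_witnessField_mul_gw h01,
    integral_frob_jac_witnessField_mul_gw h01⟩
end
end

section
/- Operator inequality for the Witten Laplacian: let φ be C^2 with pointwise bound 4√d |D^2 φ| ≤ |∇φ|^2 + C_φ − 1 for some C_φ ≥ 8. Then for all smooth compactly supported f : R^d → R, ∫ (1 + |∇φ|^2) f^2 e^{−φ} dx ≤ 8 ∫ |∇f|^2 e^{−φ} dx + C_φ ∫ f^2 e^{−φ} dx (that is, ⌊∇φ⌉^2 ≤ −8Δ_φ + C_φ Id as quadratic forms on L^2(e^{−φ}dx)). -/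
open MeasureTheory Real

noncomputable section

lemma pd_eq_zero_of_nmem_tsupport {d : ℕ} {g : (Fin d → ℝ) → ℝ} {x : Fin d → ℝ}
    (hx : x ∉ tsupport g) (i : Fin d) : pd i g x = 0 := by
  have : fderiv ℝ g x = 0 := by
    have := support_fderiv_subset (𝕜 := ℝ) (f := g)
    by_contra h
    exact hx (this h)
  simp [pd, this]

lemma integral_pd_eq_zero {d : ℕ} (i : Fin d) (g : (Fin d → ℝ) → ℝ)
    (hg : ContDiff ℝ 1 g) (hsupp : HasCompactSupport g) :
    ∫ x, pd i g x = 0 := by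
  obtain ⟨n, rfl⟩ : ∃ n, d = n + 1 := by
    cases d with
    | zero => exact i.elim0
    | succ n => exact ⟨n, rfl⟩
  obtain ⟨R, hR0, hRs⟩ : ∃ R : ℝ, 0 < R ∧ ∀ y ∈ tsupport g, ‖y‖ < R := by
    obtain ⟨R, hR⟩ := hsupp.isBounded.subset_ball 0
    exact ⟨|R| + 1, by positivity, fun y hy => by
      have := hR hy
      simp only [Metric.mem_ball, dist_zero_right] at this
      calc ‖y‖ < R := this
        _ ≤ |R| + 1 := by cases abs_cases R <;> linarith⟩
  set a : Fin (n+1) → ℝ := fun _ => -R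
  set b : Fin (n+1) → ℝ := fun _ => R
  have hle : a ≤ b := fun _ => by simp [a, b]; linarith
  have hzero : ∀ y : Fin (n+1) → ℝ, ¬(‖y‖ < R) → g y = 0 := by
    intro y hy
    by_contra h
    exact hy (hRs y (subset_tsupport g h))
  have key := integral_divergence_of_hasFDerivAt_off_countable' a b hle
    (fun j => if j = i then g else 0)
    (fun j => if j = i then fderiv ℝ g else 0) ∅ Set.countable_empty
    (fun j => by
      rcases eq_or_ne j i with h | h
      · simpa [h] using (hg.continuous).continuousOn
      · simp only [h, ↓reduceIte]
        exact continuousOn_const)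
    (fun x _ j => by
      rcases eq_or_ne j i with h | h
      · simpa [h] using (hg.differentiable one_ne_zero x).hasFDerivAt
      · simp only [h, ↓reduceIte]
        exact hasFDerivAt_const (0:ℝ) x)
    (by
      apply ContinuousOn.integrableOn_compact isCompact_Icc
      apply Continuous.continuousOn
      apply continuous_finset_sum
      intro j _
      rcases eq_or_ne j i with h | h
      · simpa [h] using ((hg.fderiv_right (m := 0) (by norm_num)).clm_apply
          (contDiff_const (c := Pi.single j 1))).continuous
      · simp [h]
        exact continuous_const)
  have lhs_eq : ∀ x : Fin (n+1) → ℝ,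
      (∑ j, (if j = i then fderiv ℝ g else 0) x (Pi.single j (1:ℝ))) = pd i g x := by
    intro x
    rw [Finset.sum_eq_single i]
    · simp [pd]
    · intro j _ hj; simp [hj]
    · intro h; exact absurd (Finset.mem_univ i) h
  have rhs_eq : ∀ j : Fin (n+1), ∀ c ∈ ({-R, R} : Set ℝ),
      (∫ x : Fin n → ℝ in Set.Icc (a ∘ j.succAbove) (b ∘ j.succAbove),
        (if j = i then g else 0) (j.insertNth c x)) = 0 := by
    intro j c hc
    rcases eq_or_ne j i with rfl | h
    · simp only [if_pos rfl]
      have : ∀ x : Fin n → ℝ, g (j.insertNth c x) = 0 := by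
        intro x
        apply hzero
        have h1 : |c| ≤ ‖(j.insertNth c x : Fin (n+1) → ℝ)‖ := by
          have := norm_le_pi_norm (f := (j.insertNth c x : Fin (n+1) → ℝ)) j
          simpa [Fin.insertNth_apply_same] using this
        have h2 : |c| = R := by
          simp only [Set.mem_insert_iff, Set.mem_singleton_iff] at hc
          rcases hc with rfl | rfl
          · rw [abs_neg]; exact abs_of_pos hR0
          · exact abs_of_pos hR0
        push_neg
        rw [← h2]; exact h1
      simp [this]
    · simp [h]
  have supp_sub : ∀ x : Fin (n+1) → ℝ, x ∉ Set.Icc a b → pd i g x = 0 := by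
    intro x hx
    apply pd_eq_zero_of_nmem_tsupport
    intro hmem
    apply hx
    have hn := hRs x hmem
    constructor <;> intro j <;>
      [skip; skip] <;>
      · have := norm_le_pi_norm (f := x) j
        have h2 : |x j| < R := lt_of_le_of_lt (by simpa using this) hn
        rw [abs_lt] at h2
        simp [a, b]
        linarith [h2.1, h2.2]
  rw [← setIntegral_eq_integral_of_forall_compl_eq_zero supp_sub]
  rw [show (∫ x in Set.Icc a b, pd i g x)
      = ∫ x in Set.Icc a b, ∑ j, (if j = i then fderiv ℝ g else 0) x (Pi.single j (1:ℝ)) from by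
    apply setIntegral_congr_fun measurableSet_Icc
    intro x _; exact (lhs_eq x).symm]
  rw [key]
  apply Finset.sum_eq_zero
  intro j _
  rw [rhs_eq j R (by simp), rhs_eq j (-R) (by simp), sub_zero]

/-- Operator inequality `⌊∇φ⌉² ≤ -8 Δ_φ + C_φ Id` as quadratic forms. -/
theorem stmt_16 (d : ℕ) (φ : (Fin d → ℝ) → ℝ) (hφ : ContDiff ℝ 2 φ)
    (Cφ : ℝ) (hCφ : 8 ≤ Cφ)
    (hptw : ∀ x, 4 * Real.sqrt d * Real.sqrt (frob (hess φ x))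
      ≤ (∑ i, (grad φ x i) ^ 2) + Cφ - 1)
    (f : (Fin d → ℝ) → ℝ) (hf : ContDiff ℝ (⊤ : ℕ∞) f) (hsupp : HasCompactSupport f) :
    ∫ x, (1 + ∑ i, (grad φ x i) ^ 2) * (f x) ^ 2 * Real.exp (-φ x)
      ≤ 8 * (∫ x, (∑ i, (pd i f x) ^ 2) * Real.exp (-φ x))
        + Cφ * ∫ x, (f x) ^ 2 * Real.exp (-φ x) := by
  -- basic regularity facts
  have hφ1 : ContDiff ℝ 1 φ := hφ.of_le one_le_two
  have hf1 : ContDiff ℝ 1 f := hf.of_le (by simp)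
  have cf : Continuous f := hf.continuous
  have cφ : Continuous φ := hφ.continuous
  have cexp : Continuous (fun x : Fin d → ℝ => Real.exp (-φ x)) :=
    Real.continuous_exp.comp cφ.neg
  have cpdφ : ∀ i, ContDiff ℝ 1 (pd i φ) := fun i =>
    (hφ.fderiv_right (m := 1) (by norm_num)).clm_apply contDiff_const
  have cpdf : ∀ i, Continuous (pd i f) := fun i =>
    ((hf.fderiv_right (m := (⊤ : ℕ∞)) (by simp)).clm_apply contDiff_const).continuous
  have chess : ∀ i j, Continuous (fun x => hess φ x i j) := fun i j =>
    (((cpdφ i).fderiv_right (m := 0) (by norm_num)).clm_apply contDiff_const).continuous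
  -- the vector field
  set V : Fin d → (Fin d → ℝ) → ℝ :=
    fun i x => f x * f x * (pd i φ x * Real.exp (-φ x)) with hV
  have hVC1 : ∀ i, ContDiff ℝ 1 (V i) := fun i =>
    (hf1.mul hf1).mul ((cpdφ i).mul ((Real.contDiff_exp.of_le le_top).comp hφ1.neg))
  have hVsupp : ∀ i, HasCompactSupport (V i) := fun i =>
    HasCompactSupport.intro hsupp (fun x hx => by
      simp [hV, image_eq_zero_of_notMem_tsupport hx])
  -- derivative of the vector field
  have pdV : ∀ i x, pd i (V i) x =
      (2 * f x * pd i f x * pd i φ x + f x ^ 2 * hess φ x i i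
        - f x ^ 2 * (pd i φ x) ^ 2) * Real.exp (-φ x) := by
    intro i x
    have hfd : HasFDerivAt f (fderiv ℝ f x) x :=
      (hf1.differentiable one_ne_zero x).hasFDerivAt
    have hφd : HasFDerivAt φ (fderiv ℝ φ x) x :=
      (hφ1.differentiable one_ne_zero x).hasFDerivAt
    have hpdφd : HasFDerivAt (pd i φ) (fderiv ℝ (pd i φ) x) x :=
      ((cpdφ i).differentiable one_ne_zero x).hasFDerivAt
    have hexp : HasFDerivAt (fun y => Real.exp (-φ y))
        (Real.exp (-φ x) • (-fderiv ℝ φ x)) x := hφd.neg.exp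
    have hder := (hfd.mul hfd).mul (hpdφd.mul hexp)
    have hfder : fderiv ℝ (V i) x = _ := hder.fderiv
    have e1 : fderiv ℝ f x (Pi.single i 1) = pd i f x := rfl
    have e2 : fderiv ℝ φ x (Pi.single i 1) = pd i φ x := rfl
    have e3 : fderiv ℝ (pd i φ) x (Pi.single i 1) = hess φ x i i := rfl
    rw [show pd i (V i) x = fderiv ℝ (V i) x (Pi.single i 1) from rfl, hfder]
    simp only [ContinuousLinearMap.add_apply, ContinuousLinearMap.smul_apply,
      ContinuousLinearMap.neg_apply, smul_eq_mul, e1, e2, e3, Pi.mul_apply]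
    ring
  -- divergence integrates to zero
  have hIV : ∀ i, (∫ x, pd i (V i) x) = 0 := fun i =>
    integral_pd_eq_zero i (V i) (hVC1 i) (hVsupp i)
  set D : (Fin d → ℝ) → ℝ := fun x => ∑ i,
      (2 * f x * pd i f x * pd i φ x + f x ^ 2 * hess φ x i i
        - f x ^ 2 * (pd i φ x) ^ 2) * Real.exp (-φ x) with hD
  have ctermD : ∀ i, Continuous (fun x =>
      (2 * f x * pd i f x * pd i φ x + f x ^ 2 * hess φ x i i
        - f x ^ 2 * (pd i φ x) ^ 2) * Real.exp (-φ x)) := by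
    intro i
    have c1 : Continuous fun x => 2 * f x * pd i f x * pd i φ x :=
      ((continuous_const.mul cf).mul (cpdf i)).mul (cpdφ i).continuous
    exact ((c1.add ((cf.pow 2).mul (chess i i))).sub
      ((cf.pow 2).mul ((cpdφ i).continuous.pow 2))).mul cexp
  have htermint : ∀ i, Integrable (fun x =>
      (2 * f x * pd i f x * pd i φ x + f x ^ 2 * hess φ x i i
        - f x ^ 2 * (pd i φ x) ^ 2) * Real.exp (-φ x)) := by
    intro i
    apply (ctermD i).integrable_of_hasCompactSupport
    apply HasCompactSupport.intro hsupp
    intro x hx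
    have h0 : f x = 0 := image_eq_zero_of_notMem_tsupport hx
    simp [h0]
  have hDint : Integrable D := by
    rw [hD]
    exact integrable_finset_sum _ (fun i _ => htermint i)
  have hD0 : (∫ x, D x) = 0 := by
    rw [hD, integral_finset_sum _ (fun i _ => htermint i)]
    apply Finset.sum_eq_zero
    intro i _
    rw [show (fun x => (2 * f x * pd i f x * pd i φ x + f x ^ 2 * hess φ x i i
        - f x ^ 2 * (pd i φ x) ^ 2) * Real.exp (-φ x)) = fun x => pd i (V i) x from
      funext fun x => (pdV i x).symm]
    exact hIV i
  -- integrability of the three main integrands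
  have cG : Continuous (fun x => ∑ i, (grad φ x i) ^ 2) :=
    continuous_finset_sum _ (fun i _ => ((cpdφ i).continuous.pow 2))
  have hint1 : Integrable (fun x => (1 + ∑ i, (grad φ x i) ^ 2) * (f x) ^ 2 * Real.exp (-φ x)) := by
    apply Continuous.integrable_of_hasCompactSupport
    · exact ((continuous_const.add cG).mul (cf.pow 2)).mul cexp
    · apply HasCompactSupport.intro hsupp
      intro x hx
      simp [image_eq_zero_of_notMem_tsupport hx]
  have hint2 : Integrable (fun x => (∑ i, (pd i f x) ^ 2) * Real.exp (-φ x)) := by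
    apply Continuous.integrable_of_hasCompactSupport
    · exact (continuous_finset_sum _ (fun i _ => (cpdf i).pow 2)).mul cexp
    · apply HasCompactSupport.intro hsupp
      intro x hx
      have : ∀ i, pd i f x = 0 := fun i => pd_eq_zero_of_nmem_tsupport hx i
      simp [this]
  have hint3 : Integrable (fun x => (f x) ^ 2 * Real.exp (-φ x)) := by
    apply Continuous.integrable_of_hasCompactSupport
    · exact (cf.pow 2).mul cexp
    · apply HasCompactSupport.intro hsupp
      intro x hx
      simp [image_eq_zero_of_notMem_tsupport hx]
  -- pointwise inequality
  have hptw2 : ∀ x, 0 ≤ 8 * ((∑ i, (pd i f x) ^ 2) * Real.exp (-φ x))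
      + Cφ * ((f x) ^ 2 * Real.exp (-φ x))
      - (1 + ∑ i, (grad φ x i) ^ 2) * (f x) ^ 2 * Real.exp (-φ x) - 4 * D x := by
    intro x
    have hE : (0:ℝ) ≤ Real.exp (-φ x) := (Real.exp_pos _).le
    -- trace bound
    have htrace : (∑ i, hess φ x i i) ≤ Real.sqrt d * Real.sqrt (frob (hess φ x)) := by
      have h1 : (∑ i, hess φ x i i) ^ 2 ≤ (d : ℝ) * frob (hess φ x) := by
        have cs := Finset.sum_mul_sq_le_sq_mul_sq Finset.univ (fun _ : Fin d => (1:ℝ))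
          (fun i => hess φ x i i)
        simp only [one_mul, one_pow, mul_one, Finset.sum_const, Finset.card_univ,
          Fintype.card_fin, nsmul_eq_mul] at cs
        refine le_trans cs ?_
        apply mul_le_mul_of_nonneg_left _ (Nat.cast_nonneg d)
        apply Finset.sum_le_sum
        intro i _
        exact Finset.single_le_sum (fun j _ => sq_nonneg (hess φ x i j)) (Finset.mem_univ i)
      calc (∑ i, hess φ x i i) ≤ |∑ i, hess φ x i i| := le_abs_self _
        _ = Real.sqrt ((∑ i, hess φ x i i) ^ 2) := (Real.sqrt_sq_eq_abs _).symm
        _ ≤ Real.sqrt ((d : ℝ) * frob (hess φ x)) := Real.sqrt_le_sqrt h1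
        _ = Real.sqrt d * Real.sqrt (frob (hess φ x)) := Real.sqrt_mul (Nat.cast_nonneg d) _
    have h4L : 4 * (∑ i, hess φ x i i) ≤ (∑ i, (pd i φ x) ^ 2) + Cφ - 1 := by
      have := hptw x
      have hg : (∑ i, (grad φ x i) ^ 2) = ∑ i, (pd i φ x) ^ 2 := rfl
      rw [hg] at this
      nlinarith [Real.sqrt_nonneg (frob (hess φ x)), Real.sqrt_nonneg (d : ℝ)]
    have hsum_eq : (∑ i, 2 * (2 * pd i f x - f x * pd i φ x) ^ 2)
        = 8 * (∑ i, (pd i f x) ^ 2) - 8 * f x * (∑ i, pd i f x * pd i φ x)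
          + 2 * (f x) ^ 2 * (∑ i, (pd i φ x) ^ 2) := by
      rw [Finset.mul_sum, Finset.mul_sum, Finset.mul_sum, ← Finset.sum_sub_distrib,
        ← Finset.sum_add_distrib]
      exact Finset.sum_congr rfl (fun i _ => by ring)
    have hQ : (0:ℝ) ≤ ∑ i, 2 * (2 * pd i f x - f x * pd i φ x) ^ 2 :=
      Finset.sum_nonneg (fun i _ => by positivity)
    have hDx : D x = (2 * f x * (∑ i, pd i f x * pd i φ x)
        + f x ^ 2 * (∑ i, hess φ x i i) - f x ^ 2 * (∑ i, (pd i φ x) ^ 2))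
          * Real.exp (-φ x) := by
      simp only [hD]
      rw [← Finset.sum_mul]
      congr 1
      rw [Finset.mul_sum, Finset.mul_sum, Finset.mul_sum, ← Finset.sum_add_distrib,
        ← Finset.sum_sub_distrib]
      exact Finset.sum_congr rfl (fun i _ => by ring)
    have hgr : (∑ i, (grad φ x i) ^ 2) = ∑ i, (pd i φ x) ^ 2 := rfl
    rw [hDx, hgr]
    have expand : 8 * ((∑ i, (pd i f x) ^ 2) * Real.exp (-φ x))
        + Cφ * ((f x) ^ 2 * Real.exp (-φ x))
        - (1 + ∑ i, (pd i φ x) ^ 2) * (f x) ^ 2 * Real.exp (-φ x)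
        - 4 * ((2 * f x * (∑ i, pd i f x * pd i φ x)
          + f x ^ 2 * (∑ i, hess φ x i i) - f x ^ 2 * (∑ i, (pd i φ x) ^ 2))
            * Real.exp (-φ x))
        = ((∑ i, 2 * (2 * pd i f x - f x * pd i φ x) ^ 2)
          + ((∑ i, (pd i φ x) ^ 2) + Cφ - 1 - 4 * (∑ i, hess φ x i i)) * (f x) ^ 2)
            * Real.exp (-φ x) := by
      rw [hsum_eq]; ring
    rw [expand]
    apply mul_nonneg _ hE
    apply add_nonneg hQ
    apply mul_nonneg _ (sq_nonneg _)
    linarith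
  -- assemble
  have h0 : 0 ≤ ∫ x, (8 * ((∑ i, (pd i f x) ^ 2) * Real.exp (-φ x))
      + Cφ * ((f x) ^ 2 * Real.exp (-φ x))
      - (1 + ∑ i, (grad φ x i) ^ 2) * (f x) ^ 2 * Real.exp (-φ x) - 4 * D x) :=
    integral_nonneg hptw2
  have heq : (∫ x, (8 * ((∑ i, (pd i f x) ^ 2) * Real.exp (-φ x))
      + Cφ * ((f x) ^ 2 * Real.exp (-φ x))
      - (1 + ∑ i, (grad φ x i) ^ 2) * (f x) ^ 2 * Real.exp (-φ x) - 4 * D x))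
      = 8 * (∫ x, (∑ i, (pd i f x) ^ 2) * Real.exp (-φ x))
        + Cφ * (∫ x, (f x) ^ 2 * Real.exp (-φ x))
        - (∫ x, (1 + ∑ i, (grad φ x i) ^ 2) * (f x) ^ 2 * Real.exp (-φ x))
        - 4 * (∫ x, D x) := by
    have ha : Integrable (fun x => 8 * ((∑ i, (pd i f x) ^ 2) * Real.exp (-φ x))) :=
      hint2.const_mul 8
    have hb : Integrable (fun x => Cφ * ((f x) ^ 2 * Real.exp (-φ x))) :=
      hint3.const_mul Cφ
    have hab : Integrable (fun x => 8 * ((∑ i, (pd i f x) ^ 2) * Real.exp (-φ x))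
        + Cφ * ((f x) ^ 2 * Real.exp (-φ x))) := ha.add hb
    have habc : Integrable (fun x => 8 * ((∑ i, (pd i f x) ^ 2) * Real.exp (-φ x))
        + Cφ * ((f x) ^ 2 * Real.exp (-φ x))
        - (1 + ∑ i, (grad φ x i) ^ 2) * (f x) ^ 2 * Real.exp (-φ x)) := hab.sub hint1
    have hd4 : Integrable (fun x => 4 * D x) := hDint.const_mul 4
    rw [integral_sub habc hd4, integral_sub hab hint1, integral_add ha hb,
      integral_const_mul, integral_const_mul, integral_const_mul]
  rw [heq, hD0] at h0
  linarith
end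
end

section
/- Moment decomposition of stationary BGK states: if h(x,v) = r(x) + u(x)·v satisfies v·∇_x(r + u·v) = ∇_x φ · u for all (x,v), with r, u smooth, then ∇r = 0, D^s u = 0, and ∇·u − ∇φ·u = 0; moreover integrating the last equation against ⟨u⟩·x e^{−φ} dx (with e^{−φ}dx a centred probability measure) yields ⟨u⟩ = 0, and taking the trace of D^s u = 0 gives ∇φ·u = 0. -/
open MeasureTheory Real

noncomputable section

open Matrix Filter Topology

lemma single_sum {d : ℕ} (w : Fin d → ℝ) :
    w = ∑ i, w i • (Pi.single i (1:ℝ) : Fin d → ℝ) := by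
  funext j
  rw [Finset.sum_apply]
  simp [Pi.single_apply]

lemma fderiv_eq_sum_pd {d : ℕ} {f : (Fin d → ℝ) → ℝ} {x : Fin d → ℝ}
    (_hf : DifferentiableAt ℝ f x) (w : Fin d → ℝ) :
    fderiv ℝ f x w = ∑ i, w i * pd i f x := by
  conv_lhs => rw [single_sum w]
  rw [map_sum]
  simp [pd, smul_eq_mul]

variable {d : ℕ} {φ r : (Fin d → ℝ) → ℝ} {u : (Fin d → ℝ) → (Fin d → ℝ)}

lemma diff_comp (hu : ContDiff ℝ (⊤ : ℕ∞) u) (j : Fin d) (x : Fin d → ℝ) :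
    DifferentiableAt ℝ (fun y => u y j) x :=
  (ContinuousLinearMap.proj (R := ℝ) (φ := fun _ : Fin d => ℝ) j).differentiableAt.comp x
    ((hu.differentiable (by simp)).differentiableAt)

lemma hfd (hr : ContDiff ℝ (⊤ : ℕ∞) r) (hu : ContDiff ℝ (⊤ : ℕ∞) u) (x v : Fin d → ℝ) (i : Fin d) :
    fderiv ℝ (fun y => r y + ∑ j, u y j * v j) x (Pi.single i 1)
      = pd i r x + ∑ j, v j * jac u x j i := by
  have hdr : DifferentiableAt ℝ r x := (hr.differentiable (by simp)).differentiableAt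
  have hduj : ∀ j : Fin d, DifferentiableAt ℝ (fun y => u y j) x := fun j => diff_comp hu j x
  have hsum : DifferentiableAt ℝ (fun y => ∑ j, u y j * v j) x :=
    DifferentiableAt.fun_sum (fun j _ => (hduj j).mul_const (v j))
  rw [fderiv_fun_add hdr hsum]
  rw [fderiv_fun_sum (fun j _ => (hduj j).mul_const (v j))]
  simp only [ContinuousLinearMap.add_apply, ContinuousLinearMap.coe_sum', Finset.sum_apply]
  congr 1
  refine Finset.sum_congr rfl (fun j _ => ?_)
  rw [fderiv_mul_const (hduj j)]
  simp [jac, pd, mul_comm]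

lemma extract (p : Fin d → ℝ) (q : Fin d → Fin d → ℝ)
    (h : ∀ v : Fin d → ℝ, ∑ i, v i * (p i + ∑ j, v j * q i j) = 0) :
    (∀ k, p k = 0) ∧ (∀ k, q k k = 0) ∧ (∀ k l, k ≠ l → q k l + q l k = 0) := by
  have expand : ∀ v : Fin d → ℝ,
      ∑ i, v i * p i + ∑ i, ∑ j, v i * v j * q i j = 0 := by
    intro v
    have := h v
    rw [← this]
    rw [← Finset.sum_add_distrib]
    refine Finset.sum_congr rfl (fun i _ => ?_)
    rw [mul_add, Finset.mul_sum]
    congr 1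
    exact Finset.sum_congr rfl (fun j _ => by ring)
  have hdiag : ∀ (k) (c : ℝ), c * p k + c * c * q k k = 0 := by
    intro k c
    have := expand (Pi.single k c)
    simpa [Pi.single_apply, ite_mul, mul_ite, Finset.sum_ite_eq'] using this
  have hp : ∀ k, p k = 0 := by
    intro k
    have h1 := hdiag k 1
    have h2 := hdiag k (-1)
    linarith
  have hq : ∀ k, q k k = 0 := by
    intro k
    have h1 := hdiag k 1
    have h2 := hp k
    linarith
  refine ⟨hp, hq, ?_⟩
  intro k l hkl
  have := expand (Pi.single k 1 + Pi.single l 1)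
  simp only [Pi.add_apply, Pi.single_apply, add_mul, mul_add, ite_mul, mul_ite, one_mul,
    zero_mul, mul_one, mul_zero, Finset.sum_add_distrib, Finset.sum_ite_eq',
    Finset.mem_univ, if_true, hkl, hkl.symm, if_false, if_neg hkl, if_neg hkl.symm] at this
  have h1 := hp k
  have h2 := hp l
  have h3 := hq k
  have h4 := hq l
  linarith

lemma bgk_pointwise (hr : ContDiff ℝ (⊤ : ℕ∞) r) (hu : ContDiff ℝ (⊤ : ℕ∞) u)
    (heq : ∀ x v : Fin d → ℝ,
      ∑ i, v i * fderiv ℝ (fun y => r y + ∑ j, u y j * v j) x (Pi.single i 1)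
        = ∑ i, grad φ x i * u x i) :
    (∀ x i, pd i r x = 0) ∧ (∀ (x) (i j : Fin d), jac u x i j + jac u x j i = 0) ∧
      (∀ x, ∑ i, grad φ x i * u x i = 0) := by
  have h0 : ∀ x, ∑ i, grad φ x i * u x i = 0 := by
    intro x
    have := (heq x 0).symm
    simpa using this
  have key : ∀ x v : Fin d → ℝ, ∑ i, v i * (pd i r x + ∑ j, v j * jac u x j i) = 0 := by
    intro x v
    have h1 := heq x v
    rw [h0 x] at h1
    rw [← h1]
    exact Finset.sum_congr rfl (fun i _ => by rw [hfd hr hu x v i])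
  have hx : ∀ x, (∀ k, pd k r x = 0) ∧ (∀ k, jac u x k k = 0) ∧
      (∀ k l, k ≠ l → jac u x l k + jac u x k l = 0) := by
    intro x
    exact extract (fun i => pd i r x) (fun i j => jac u x j i) (key x)
  refine ⟨fun x i => (hx x).1 i, ?_, h0⟩
  intro x i j
  by_cases hij : i = j
  · subst hij
    have := (hx x).2.1 i
    linarith
  · have := (hx x).2.2 j i (fun hh => hij hh.symm)
    linarith

lemma pd_pd {f : (Fin d → ℝ) → ℝ} (hf : ContDiff ℝ (⊤ : ℕ∞) f) (k j : Fin d) (x : Fin d → ℝ) :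
    pd k (fun y => pd j f y) x = fderiv ℝ (fderiv ℝ f) x (Pi.single k 1) (Pi.single j 1) := by
  have hdf : DifferentiableAt ℝ (fun y => fderiv ℝ f y) x :=
    ((hf.fderiv_right (m := 1) (by norm_num; exact WithTop.coe_le_coe.mpr le_top)).differentiable (by norm_num)).differentiableAt
  have : pd k (fun y => pd j f y) x
      = fderiv ℝ (fun y => fderiv ℝ f y (Pi.single j 1)) x (Pi.single k 1) := rfl
  rw [this, fderiv_clm_apply hdf (differentiableAt_const _)]
  simp

lemma pd_swap {f : (Fin d → ℝ) → ℝ} (hf : ContDiff ℝ (⊤ : ℕ∞) f) (k j : Fin d) (x : Fin d → ℝ) :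
    pd k (fun y => pd j f y) x = pd j (fun y => pd k f y) x := by
  rw [pd_pd hf, pd_pd hf]
  exact (hf.contDiffAt.of_le (m := 2) (WithTop.coe_le_coe.mpr le_top)).isSymmSndFDerivAt (n := 2) (by simp) _ _

lemma comp_contDiff (hu : ContDiff ℝ (⊤ : ℕ∞) u) (i : Fin d) : ContDiff ℝ (⊤ : ℕ∞) (fun y => u y i) :=
  (ContinuousLinearMap.proj (R := ℝ) (φ := fun _ : Fin d => ℝ) i).contDiff.comp hu

lemma jac_const (hu : ContDiff ℝ (⊤ : ℕ∞) u)
    (hq : ∀ (x : Fin d → ℝ) (i j : Fin d), jac u x i j + jac u x j i = 0)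
    (x : Fin d → ℝ) (i j : Fin d) : jac u x i j = jac u 0 i j := by
  have hswap : ∀ (a b c : Fin d) (y : Fin d → ℝ),
      pd a (fun z => pd b (fun w => u w c) z) y = pd b (fun z => pd a (fun w => u w c) z) y :=
    fun a b c y => pd_swap (comp_contDiff hu c) a b y
  have hneg : ∀ (a b c : Fin d) (y : Fin d → ℝ),
      pd a (fun z => pd b (fun w => u w c) z) y = - pd a (fun z => pd c (fun w => u w b) z) y := by
    intro a b c y
    have hfun : (fun z => pd b (fun w => u w c) z) = (fun z => - pd c (fun w => u w b) z) := by
      funext z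
      have := hq z c b
      simp only [jac] at this
      linarith
    rw [hfun]
    show fderiv ℝ (fun z => - pd c (fun w => u w b) z) y (Pi.single a 1) = _
    rw [fderiv_fun_neg]
    simp only [ContinuousLinearMap.neg_apply]
    rfl
  -- the function x ↦ jac u x i j has all partial derivatives zero
  have hpdz : ∀ (y : Fin d → ℝ) (k : Fin d), pd k (fun z => jac u z i j) y = 0 := by
    intro y k
    have h1 : pd k (fun z => pd j (fun w => u w i) z) y
        = - pd k (fun z => pd j (fun w => u w i) z) y := by
      calc pd k (fun z => pd j (fun w => u w i) z) y
          = - pd k (fun z => pd i (fun w => u w j) z) y := hneg k j i y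
        _ = - pd i (fun z => pd k (fun w => u w j) z) y := by rw [hswap k i j y]
        _ = pd i (fun z => pd j (fun w => u w k) z) y := by rw [hneg i k j y]; ring
        _ = pd j (fun z => pd i (fun w => u w k) z) y := hswap i j k y
        _ = - pd j (fun z => pd k (fun w => u w i) z) y := hneg j i k y
        _ = - pd k (fun z => pd j (fun w => u w i) z) y := by rw [hswap j k i y]
    have : pd k (fun z => pd j (fun w => u w i) z) y = 0 := by linarith
    simpa [jac] using this
  have hgdiff : Differentiable ℝ (fun z => jac u z i j) := by
    have : ContDiff ℝ 1 (fun z => fderiv ℝ (fun w => u w i) z) :=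
      (comp_contDiff hu i).fderiv_right (m := 1) (by norm_num; exact WithTop.coe_le_coe.mpr le_top)
    have hd : Differentiable ℝ (fun z => fderiv ℝ (fun w => u w i) z) :=
      this.differentiable (by norm_num)
    exact fun z => ((ContinuousLinearMap.apply ℝ ℝ (Pi.single j 1 : Fin d → ℝ)).differentiableAt).comp z (hd z)
  have hfz : ∀ y, fderiv ℝ (fun z => jac u z i j) y = 0 := by
    intro y
    ext w
    rw [fderiv_eq_sum_pd (hgdiff y)]
    simp [hpdz y]
  exact is_const_of_fderiv_eq_zero hgdiff hfz x 0

lemma affine (hu : ContDiff ℝ (⊤ : ℕ∞) u)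
    (hq : ∀ (x : Fin d → ℝ) (i j : Fin d), jac u x i j + jac u x j i = 0)
    (x : Fin d → ℝ) (i : Fin d) :
    u x i = u 0 i + ∑ j, jac u 0 i j * x j := by
  set c : Fin d → ℝ := fun j => jac u 0 i j with hc
  let L : (Fin d → ℝ) →L[ℝ] ℝ := ∑ j, c j • ContinuousLinearMap.proj j
  have hL : ∀ z, L z = ∑ j, c j * z j := by
    intro z
    simp [L, ContinuousLinearMap.sum_apply]
  have hGdiff : Differentiable ℝ (fun z => u z i - L z) :=
    fun z => ((comp_contDiff hu i).differentiable (by simp) z).sub (L.differentiableAt)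
  have hGd : ∀ y, fderiv ℝ (fun z => u z i - L z) y = 0 := by
    intro y
    have hdu : DifferentiableAt ℝ (fun z => u z i) y := diff_comp hu i y
    ext w
    rw [fderiv_fun_sub hdu L.differentiableAt]
    rw [L.fderiv]
    simp only [ContinuousLinearMap.sub_apply, ContinuousLinearMap.zero_apply]
    rw [fderiv_eq_sum_pd hdu, hL]
    have : ∀ j, pd j (fun z => u z i) y = c j := by
      intro j
      have := jac_const hu hq y i j
      simpa [jac, hc] using this
    rw [Finset.sum_congr rfl (fun j _ => by rw [this j])]
    rw [Finset.sum_congr rfl (fun j _ => mul_comm (w j) (c j))]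
    ring
  have := is_const_of_fderiv_eq_zero hGdiff hGd x 0
  rw [hL, hL] at this
  simp only [Pi.zero_apply, mul_zero, Finset.sum_const_zero, sub_zero] at this
  linarith [this]


attribute [local instance] Matrix.linftyOpNormedAddCommGroup Matrix.linftyOpNormedRing
  Matrix.linftyOpNormedAlgebra

variable {d : ℕ}

/-- `N ↦ N *ᵥ v` as a continuous linear map in the matrix. -/
def mvCLM (v : Fin d → ℝ) : Matrix (Fin d) (Fin d) ℝ →L[ℝ] (Fin d → ℝ) :=
  LinearMap.toContinuousLinearMap
    { toFun := fun N => N.mulVec v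
      map_add' := fun N P => Matrix.add_mulVec N P v
      map_smul' := fun c N => by ext i; simp [Matrix.smul_mulVec] }

/-- `x ↦ A *ᵥ x` as a continuous linear map in the vector. -/
def vCLM (A : Matrix (Fin d) (Fin d) ℝ) : (Fin d → ℝ) →L[ℝ] (Fin d → ℝ) :=
  LinearMap.toContinuousLinearMap A.mulVecLin

lemma vCLM_apply (A : Matrix (Fin d) (Fin d) ℝ) (x : Fin d → ℝ) : vCLM A x = A.mulVec x := rfl

/-- `v ↦ v ⬝ᵥ S` as a continuous linear map. -/
def dpCLM (S : Fin d → ℝ) : (Fin d → ℝ) →L[ℝ] ℝ :=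
  LinearMap.toContinuousLinearMap
    { toFun := fun v => dotProduct v S
      map_add' := fun x y => add_dotProduct x y S
      map_smul' := fun c x => smul_dotProduct c x S }

lemma dpCLM_apply (S v : Fin d → ℝ) : dpCLM S v = v ⬝ᵥ S := rfl

open NormedSpace in
lemma key_integral (φ : (Fin d → ℝ) → ℝ) (hφ : ContDiff ℝ 2 φ)
    (hnorm : ∫ x, Real.exp (-φ x) = 1)
    (A : Matrix (Fin d) (Fin d) ℝ) (a : Fin d → ℝ)
    (hsk : Aᵀ = -A)
    (horto : ∀ x, fderiv ℝ φ x (a + A.mulVec x) = 0)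
    (hint : ∀ i, Integrable (fun x => (a i + A.mulVec x i) * Real.exp (-φ x))) :
    ∀ i, ∫ x, (a i + A.mulVec x i) * Real.exp (-φ x) = 0 := by
  have hφd : Differentiable ℝ φ := hφ.differentiable (by norm_num)
  have hφc : Continuous φ := hφ.continuous
  have hexp_int : Integrable (fun x : Fin d → ℝ => Real.exp (-φ x)) := by
    by_contra h
    rw [integral_undef h] at hnorm
    norm_num at hnorm
  set M : ℝ → Matrix (Fin d) (Fin d) ℝ := fun t => NormedSpace.exp (t • A) with hMdef
  have hM : ∀ t, HasDerivAt M (A * M t) t := fun t => hasDerivAt_exp_smul_const' A t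
  have hMcont : Continuous M := by
    rw [continuous_iff_continuousAt]; exact fun t => (hM t).continuousAt
  have hM0 : M 0 = 1 := by simp [hMdef, NormedSpace.exp_zero]
  have hMadd : ∀ s t, M s * M t = M (s + t) := by
    intro s t
    rw [hMdef]
    simp only
    rw [add_smul]
    exact (NormedSpace.exp_add_of_commute (Commute.smul_left (Commute.smul_right rfl t) s)).symm
  have hMT : ∀ t, (M t)ᵀ = M (-t) := by
    intro t
    rw [hMdef]
    simp only
    rw [← Matrix.exp_transpose]
    congr 1
    rw [Matrix.transpose_smul, hsk]
    module
  have hMinv : ∀ t, M t * M (-t) = 1 := fun t => by rw [hMadd]; simp [hM0]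
  have hdet_ne : ∀ t, (M t).det ≠ 0 := by
    intro t
    have h1 : (M t).det * (M (-t)).det = 1 := by
      rw [← Matrix.det_mul, hMinv t, Matrix.det_one]
    intro h
    rw [h, zero_mul] at h1
    norm_num at h1
  have hdet1 : ∀ t, |(M t).det| = 1 := by
    intro t
    have h1 : (M t).det * (M (-t)).det = 1 := by
      rw [← Matrix.det_mul, hMinv t, Matrix.det_one]
    have h2 : (M (-t)).det = (M t).det := by rw [← hMT t, Matrix.det_transpose]
    rw [h2] at h1
    rcases mul_self_eq_one_iff.mp h1 with h | h <;> rw [h] <;> norm_num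
  -- derivative of t ↦ M t *ᵥ v
  have hMv : ∀ (t : ℝ) (v : Fin d → ℝ),
      HasDerivAt (fun s => (M s).mulVec v) ((A * M t).mulVec v) t := by
    intro t v
    have := ((mvCLM v).hasFDerivAt (x := M t)).comp_hasDerivAt t (hM t)
    simp only [Function.comp_def] at this
    exact this
  have hMvcont : ∀ v : Fin d → ℝ, Continuous (fun s => (M s).mulVec v) := by
    intro v
    exact (mvCLM v).continuous.comp hMcont
  set b : ℝ → (Fin d → ℝ) := fun t => ∫ s in (0:ℝ)..t, (M s).mulVec a with hbdef
  have hbderiv : ∀ t, HasDerivAt b ((M t).mulVec a) t := by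
    intro t
    exact ((hMvcont a).integral_hasStrictDerivAt 0 t).hasDerivAt
  have hb0 : b 0 = 0 := intervalIntegral.integral_same
  have hAb : ∀ t, A.mulVec (b t) = (M t).mulVec a - a := by
    intro t
    have h1 : A.mulVec (b t) = ∫ s in (0:ℝ)..t, A.mulVec ((M s).mulVec a) := by
      have := (vCLM A).intervalIntegral_comp_comm ((hMvcont a).intervalIntegrable (μ := volume) 0 t)
      simpa [vCLM_apply] using this.symm
    rw [h1]
    have h2 : ∀ s ∈ Set.uIcc (0:ℝ) t, HasDerivAt (fun s => (M s).mulVec a)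
        (A.mulVec ((M s).mulVec a)) s := by
      intro s _
      simpa [Matrix.mulVec_mulVec] using hMv s a
    rw [intervalIntegral.integral_eq_sub_of_hasDerivAt h2
      (((vCLM A).continuous.comp (hMvcont a)).intervalIntegrable (μ := volume) 0 t)]
    rw [hM0, Matrix.one_mulVec]
  -- invariance of φ along the flow
  have hphi_inv : ∀ (t : ℝ) (x : Fin d → ℝ), φ ((M t).mulVec x + b t) = φ x := by
    intro t x
    have hψ : ∀ s : ℝ, HasDerivAt (fun τ => φ ((M τ).mulVec x + b τ)) 0 s := by
      intro s
      have hin : HasDerivAt (fun τ => (M τ).mulVec x + b τ)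
          ((A * M s).mulVec x + (M s).mulVec a) s := (hMv s x).add (hbderiv s)
      have hout := ((hφd ((M s).mulVec x + b s)).hasFDerivAt).comp_hasDerivAt s hin
      have hvec : (A * M s).mulVec x + (M s).mulVec a
          = a + A.mulVec ((M s).mulVec x + b s) := by
        rw [Matrix.mulVec_add, hAb s, ← Matrix.mulVec_mulVec]
        abel
      rw [hvec] at hout
      simpa [horto, Function.comp_def] using hout
    have hconst := is_const_of_deriv_eq_zero
      (fun s => (hψ s).differentiableAt) (fun s => (hψ s).deriv) t 0
    rw [hconst]
    simp [hM0, hb0, Matrix.one_mulVec]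
  -- change of variables
  have hCOV : ∀ (t : ℝ) (f : (Fin d → ℝ) → ℝ), Continuous f →
      ∫ x, f ((M t).mulVec x + b t) = ∫ x, f x := by
    intro t f hf
    have hmapv : Measure.map (Matrix.toLin' (M t)) volume = volume := by
      rw [Real.map_matrix_volume_pi_eq_smul_volume_pi (hdet_ne t)]
      rw [abs_inv, hdet1 t]
      norm_num
    have hTcont : Continuous (Matrix.toLin' (M t) : (Fin d → ℝ) → (Fin d → ℝ)) := by
      rw [Matrix.toLin'_apply']
      exact (vCLM (M t)).continuous
    have hg : Continuous fun y => f (y + b t) :=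
      hf.comp (continuous_id.add continuous_const)
    calc ∫ x, f ((M t).mulVec x + b t)
        = ∫ x, (fun y => f (y + b t)) (Matrix.toLin' (M t) x) := by
          refine integral_congr_ae (Filter.Eventually.of_forall fun x => ?_)
          simp only [Matrix.toLin'_apply]
      _ = ∫ y, (fun y => f (y + b t)) y ∂(Measure.map (Matrix.toLin' (M t)) volume) := by
          rw [integral_map hTcont.measurable.aemeasurable]
          rw [hmapv]
          exact hg.aestronglyMeasurable
      _ = ∫ y, f (y + b t) := by rw [hmapv]
      _ = ∫ y, f y := by rw [integral_add_right_eq_self (fun y => f y) (b t)]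
  set S : Fin d → ℝ := fun i => ∫ x, (a i + A.mulVec x i) * Real.exp (-φ x) with hSdef
  have hucont : ∀ i, Continuous (fun y : Fin d → ℝ => a i + A.mulVec y i) := by
    intro i
    exact continuous_const.add ((continuous_apply i).comp (vCLM A).continuous)
  have hAM : ∀ t, A * M t = M t * A := by
    intro t
    exact ((Commute.smul_right (Commute.refl A) t).exp_right).eq
  have hMS : ∀ t, (M t).mulVec S = S := by
    intro t
    funext i
    have hfc : Continuous (fun y => (a i + A.mulVec y i) * Real.exp (-φ y)) :=
      (hucont i).mul (Real.continuous_exp.comp hφc.neg)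
    have h1 := hCOV t _ hfc
    -- pointwise identity
    have h2 : ∀ x, (a i + A.mulVec ((M t).mulVec x + b t) i) * Real.exp (-φ ((M t).mulVec x + b t))
        = ∑ j, M t i j * ((a j + A.mulVec x j) * Real.exp (-φ x)) := by
      intro x
      have hv : a + A.mulVec ((M t).mulVec x + b t) = (M t).mulVec (a + A.mulVec x) := by
        rw [Matrix.mulVec_add, hAb t, Matrix.mulVec_mulVec, hAM t, ← Matrix.mulVec_mulVec,
          Matrix.mulVec_add]
        abel
      have hv' : a i + A.mulVec ((M t).mulVec x + b t) i = ((M t).mulVec (a + A.mulVec x)) i := by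
        have := congrFun hv i
        simpa using this
      rw [hv', hphi_inv t x]
      rw [Matrix.mulVec, dotProduct, Finset.sum_mul]
      exact Finset.sum_congr rfl (fun j _ => by simp [mul_assoc])
    rw [integral_congr_ae (Filter.Eventually.of_forall h2)] at h1
    rw [integral_finset_sum _ (fun j _ => (hint j).const_mul (M t i j))] at h1
    have h3 : ∀ j, ∫ x, M t i j * ((a j + A.mulVec x j) * Real.exp (-φ x)) = M t i j * S j := by
      intro j
      rw [integral_const_mul]
    rw [Finset.sum_congr rfl (fun j _ => h3 j)] at h1
    have h4 : (M t *ᵥ S) i = ∑ j, M t i j * S j := rfl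
    rw [h4, h1]
  have hAS : A.mulVec S = 0 := by
    funext i
    have hconst : (fun t => ((M t).mulVec S) i) = fun _ => S i := by
      funext t; rw [hMS t]
    have hder : HasDerivAt (fun t => ((M t).mulVec S) i) ((A.mulVec S) i) 0 := by
      have h0 := hMv 0 S
      have := ((ContinuousLinearMap.proj (R := ℝ) (φ := fun _ : Fin d => ℝ) i).hasFDerivAt
        (x := (M 0).mulVec S)).comp_hasDerivAt 0 h0
      simp only [hM0, mul_one] at this
      simpa [Function.comp_def] using this
    rw [hconst] at hder
    have := hder.unique (hasDerivAt_const 0 (S i))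
    simpa using this
  -- `S ᵥ* M t = S`
  have hvM : ∀ t, S ᵥ* (M t) = S := by
    intro t
    have h1 : M t = (M (-t))ᵀ := by rw [hMT (-t), neg_neg]
    rw [h1, Matrix.vecMul_transpose, hMS (-t)]
  have hdotM : ∀ (t : ℝ) (x : Fin d → ℝ), (M t *ᵥ x) ⬝ᵥ S = x ⬝ᵥ S := by
    intro t x
    rw [dotProduct_comm, Matrix.dotProduct_mulVec, hvM, dotProduct_comm]
  have hbS : ∀ t, b t ⬝ᵥ S = t * (a ⬝ᵥ S) := by
    intro t
    have h1 : dpCLM S (b t) = ∫ s in (0:ℝ)..t, dpCLM S (M s *ᵥ a) := by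
      have := (dpCLM S).intervalIntegral_comp_comm ((hMvcont a).intervalIntegrable (μ := volume) 0 t)
      exact this.symm
    have h2 : ∀ s, dpCLM S (M s *ᵥ a) = a ⬝ᵥ S := by
      intro s
      rw [dpCLM_apply, hdotM]
    rw [dpCLM_apply] at h1
    rw [h1, intervalIntegral.integral_congr (fun s _ => h2 s)]
    simp [intervalIntegral.integral_const]
  have hμ0 : (volume : Measure (Fin d → ℝ)) ≠ 0 := by
    intro h
    rw [h] at hnorm
    simp [integral_zero_measure] at hnorm
  have hdotcont : Continuous (fun y : Fin d → ℝ => y ⬝ᵥ S) := (dpCLM S).continuous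
  -- a ⬝ᵥ S = 0
  have haS : a ⬝ᵥ S = 0 := by
    by_contra hα
    set G : ℝ → ℝ := fun s => ∫ x, Real.exp (-(x ⬝ᵥ S + s)^2) * Real.exp (-φ x) with hGdef
    have hGt : ∀ t : ℝ, G (t * (a ⬝ᵥ S)) = G 0 := by
      intro t
      have hf : Continuous (fun y : Fin d → ℝ => Real.exp (-(y ⬝ᵥ S + 0)^2) * Real.exp (-φ y)) := by
        exact (Real.continuous_exp.comp (((hdotcont.add continuous_const).pow 2).neg)).mul
          (Real.continuous_exp.comp hφc.neg)
      have h1 := hCOV t _ hf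
      have h2 : ∀ x, Real.exp (-((M t *ᵥ x + b t) ⬝ᵥ S + 0)^2) * Real.exp (-φ (M t *ᵥ x + b t))
          = Real.exp (-(x ⬝ᵥ S + t * (a ⬝ᵥ S))^2) * Real.exp (-φ x) := by
        intro x
        rw [hphi_inv t x]
        congr 3
        rw [add_dotProduct, hdotM, hbS]
        ring
      rw [integral_congr_ae (Filter.Eventually.of_forall h2)] at h1
      rw [hGdef]
      simp only
      rw [← h1]
    have hGall : ∀ s, G s = G 0 := by
      intro s
      have := hGt (s / (a ⬝ᵥ S))
      rwa [div_mul_cancel₀ _ hα] at this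
    have hGlim : Tendsto (fun n : ℕ => G (n : ℝ)) atTop (𝓝 (∫ _ : Fin d → ℝ, (0:ℝ))) := by
      apply tendsto_integral_of_dominated_convergence (fun x => Real.exp (-φ x))
      · intro n
        exact ((Real.continuous_exp.comp (((hdotcont.add continuous_const).pow 2).neg)).mul
          (Real.continuous_exp.comp hφc.neg)).aestronglyMeasurable
      · exact hexp_int
      · intro n
        refine Filter.Eventually.of_forall (fun x => ?_)
        rw [Real.norm_eq_abs, abs_mul, abs_of_pos (Real.exp_pos _), abs_of_pos (Real.exp_pos _)]
        have h1 : Real.exp (-(x ⬝ᵥ S + n)^2) ≤ 1 := by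
          rw [← Real.exp_zero]
          apply Real.exp_le_exp.mpr
          nlinarith [sq_nonneg (x ⬝ᵥ S + (n:ℝ))]
        nlinarith [Real.exp_pos (-φ x), Real.exp_pos (-(x ⬝ᵥ S + (n:ℝ))^2)]
      · refine Filter.Eventually.of_forall (fun x => ?_)
        have h1 : Tendsto (fun n : ℕ => -(x ⬝ᵥ S + (n:ℝ))^2) atTop atBot := by
          apply Filter.Tendsto.comp tendsto_neg_atTop_atBot
          apply Filter.Tendsto.comp (tendsto_pow_atTop (by norm_num))
          exact tendsto_atTop_add_const_left _ _ tendsto_natCast_atTop_atTop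
        have h2 : Tendsto (fun n : ℕ => Real.exp (-(x ⬝ᵥ S + (n:ℝ))^2)) atTop (𝓝 0) :=
          Real.tendsto_exp_atBot.comp h1
        simpa using h2.mul_const (Real.exp (-φ x))
    have hconstlim : Tendsto (fun n : ℕ => G (n : ℝ)) atTop (𝓝 (G 0)) := by
      have : (fun n : ℕ => G (n : ℝ)) = fun _ => G 0 := funext (fun n => hGall n)
      rw [this]
      exact tendsto_const_nhds
    have hG0 : G 0 = 0 := by
      have := tendsto_nhds_unique hconstlim hGlim
      simpa using this
    -- but G 0 > 0
    have hfi : Integrable (fun x : Fin d → ℝ => Real.exp (-(x ⬝ᵥ S + 0)^2) * Real.exp (-φ x)) := by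
      apply Integrable.mono' hexp_int
      · exact ((Real.continuous_exp.comp (((hdotcont.add continuous_const).pow 2).neg)).mul
          (Real.continuous_exp.comp hφc.neg)).aestronglyMeasurable
      · refine Filter.Eventually.of_forall (fun x => ?_)
        rw [Real.norm_eq_abs, abs_mul, abs_of_pos (Real.exp_pos _), abs_of_pos (Real.exp_pos _)]
        have h1 : Real.exp (-(x ⬝ᵥ S + 0)^2) ≤ 1 := by
          rw [← Real.exp_zero]
          apply Real.exp_le_exp.mpr
          nlinarith [sq_nonneg (x ⬝ᵥ S + 0)]
        nlinarith [Real.exp_pos (-φ x), Real.exp_pos (-(x ⬝ᵥ S + 0)^2)]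
      
    have hGpos : 0 < G 0 := by
      rw [hGdef]
      simp only
      rw [integral_pos_iff_support_of_nonneg
        (fun x => by positivity) hfi]
      have hsupp : (Function.support fun x : Fin d → ℝ =>
          Real.exp (-(x ⬝ᵥ S + 0)^2) * Real.exp (-φ x)) = Set.univ := by
        apply Set.eq_univ_of_forall
        intro x
        exact mul_ne_zero (Real.exp_ne_zero _) (Real.exp_ne_zero _)
      rw [hsupp]
      exact MeasureTheory.Measure.measure_univ_pos.mpr hμ0
    linarith
  -- final: each S i = 0
  have hSvA : S ᵥ* A = 0 := by
    have h1 : Aᵀ *ᵥ S = S ᵥ* A := Matrix.mulVec_transpose A S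
    rw [← h1, hsk, Matrix.neg_mulVec, hAS, neg_zero]
  have hsum : ∑ j, S j * S j = 0 := by
    have h1 : ∀ j, S j * S j = ∫ x, S j * ((a j + A.mulVec x j) * Real.exp (-φ x)) := by
      intro j
      rw [integral_const_mul]
    rw [Finset.sum_congr rfl fun j _ => h1 j]
    rw [← integral_finset_sum _ (fun j _ => (hint j).const_mul (S j))]
    have h2 : ∀ x : Fin d → ℝ, ∑ j, S j * ((a j + A.mulVec x j) * Real.exp (-φ x)) = 0 := by
      intro x
      have h3 : ∑ j, S j * (a j + A.mulVec x j) = 0 := by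
        have h4 : ∑ j, S j * (a j + A.mulVec x j) = S ⬝ᵥ (a + A.mulVec x) := by
          rw [dotProduct]
          exact Finset.sum_congr rfl (fun j _ => by simp)
        rw [h4, dotProduct_add, Matrix.dotProduct_mulVec, hSvA,
          dotProduct_comm, haS]
        simp
      calc ∑ j, S j * ((a j + A.mulVec x j) * Real.exp (-φ x))
          = (∑ j, S j * (a j + A.mulVec x j)) * Real.exp (-φ x) := by
            rw [Finset.sum_mul]
            exact Finset.sum_congr rfl (fun j _ => by ring)
        _ = 0 := by rw [h3, zero_mul]
    rw [integral_congr_ae (Filter.Eventually.of_forall h2), integral_zero]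
  intro i
  have h5 : ∀ j ∈ Finset.univ, S j * S j = 0 :=
    (Finset.sum_eq_zero_iff_of_nonneg (fun j _ => mul_self_nonneg (S j))).mp hsum
  have h6 : S i = 0 := mul_self_eq_zero.mp (h5 i (Finset.mem_univ i))
  exact h6


/-- Moment decomposition of stationary BGK states. -/
theorem stmt_19 (d : ℕ) (φ : (Fin d → ℝ) → ℝ) (hφ : ContDiff ℝ 2 φ)
    (hnorm : ∫ x, Real.exp (-φ x) = 1)
    (hcent : ∀ i, ∫ x, x i * Real.exp (-φ x) = 0)
    (r : (Fin d → ℝ) → ℝ) (u : (Fin d → ℝ) → (Fin d → ℝ))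
    (hr : ContDiff ℝ (⊤ : ℕ∞) r) (hu : ContDiff ℝ (⊤ : ℕ∞) u)
    (hint : ∀ i, Integrable (fun x => u x i * Real.exp (-φ x)))
    (hint' : ∀ i j, Integrable (fun x => u x i * x j * Real.exp (-φ x)))
    (heq : ∀ x v : Fin d → ℝ,
      ∑ i, v i * fderiv ℝ (fun y => r y + ∑ j, u y j * v j) x (Pi.single i 1)
        = ∑ i, grad φ x i * u x i) :
    (∀ x i, pd i r x = 0) ∧
    (∀ x, symJ u x = 0) ∧
    (∀ x, diver u x - ∑ i, grad φ x i * u x i = 0) ∧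
    (∀ i, ∫ x, u x i * Real.exp (-φ x) = 0) ∧
    (∀ x, ∑ i, grad φ x i * u x i = 0) := by
  obtain ⟨hp, hqsum, h0⟩ := bgk_pointwise hr hu heq
  have hφd : Differentiable ℝ φ := hφ.differentiable (by norm_num)
  refine ⟨hp, ?_, ?_, ?_, h0⟩
  · intro x
    funext i j
    have := hqsum x i j
    simp only [symJ, Pi.zero_apply]
    linarith
  · intro x
    have hdiag : ∀ i, jac u x i i = 0 := by
      intro i
      have := hqsum x i i
      linarith
    have : diver u x = 0 := by
      simp [diver, hdiag]
    rw [this, h0 x]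
    ring
  · -- the integral conclusion
    set A : Matrix (Fin d) (Fin d) ℝ := Matrix.of (fun i j => jac u 0 i j) with hAdef
    have hAapp : ∀ (x : Fin d → ℝ) (i : Fin d), A.mulVec x i = ∑ j, jac u 0 i j * x j := by
      intro x i
      rfl
    have haff : ∀ (x : Fin d → ℝ) (i : Fin d), u x i = u 0 i + A.mulVec x i := by
      intro x i
      rw [hAapp]
      exact affine hu hqsum x i
    have hsk : Aᵀ = -A := by
      ext i j
      have := hqsum 0 j i
      simp only [Matrix.transpose_apply, Matrix.neg_apply, hAdef, Matrix.of_apply]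
      linarith
    have horto : ∀ x, fderiv ℝ φ x (u 0 + A.mulVec x) = 0 := by
      intro x
      have hvec : u 0 + A.mulVec x = u x := by
        funext i
        rw [Pi.add_apply, ← haff x i]
      rw [hvec, fderiv_eq_sum_pd (hφd x) (u x)]
      rw [← h0 x]
      exact Finset.sum_congr rfl (fun i _ => by rw [grad]; ring)
    have hintA : ∀ i, Integrable (fun x => (u 0 i + A.mulVec x i) * Real.exp (-φ x)) := by
      intro i
      have : (fun x => (u 0 i + A.mulVec x i) * Real.exp (-φ x))
          = fun x => u x i * Real.exp (-φ x) := by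
        funext x
        rw [← haff x i]
      rw [this]
      exact hint i
    intro i
    have := key_integral φ hφ hnorm A (u 0) hsk horto hintA i
    rw [← this]
    refine integral_congr_ae (Filter.Eventually.of_forall fun x => ?_)
    show u x i * Real.exp (-φ x) = (u 0 i + A.mulVec x i) * Real.exp (-φ x)
    rw [haff x i]
end
end
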